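/- arXiv:1406.0155 — 2 statements merged into one kernel-verified Lean document; each statement's English description precedes it below -/
import Mathlib

section
/- The inconsistency measure I_M defined by I_M(K) = |MSSes(K)| + |selfC(K)| − 1 does not satisfy the Independent Decomposability property: for K₁ = {a, ¬a} and K₂ = {b, ¬b} with distinct propositional variables a, b, the preconditions of Independent Decomposability hold for K₁, K₂, but I_M(K₁ ∪ K₂) = 3 while I_M(K₁) + I_M(K₂) = 2. -/
inductive PropForm (V : Type) : Type
  | var : V → PropForm V
  | neg : PropForm V → PropForm V
  | conj : PropForm V → PropForm V → PropForm V
  | disj : PropForm V → PropForm V → PropForm V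
  deriving DecidableEq

namespace PropForm
def eval {V : Type} (v : V → Bool) : PropForm V → Bool
  | var p => v p
  | neg f => !(eval v f)
  | conj f g => eval v f && eval v g
  | disj f g => eval v f || eval v g
end PropForm

/-- A finite knowledge base `K` is satisfiable (consistent) if some valuation makes
all its formulas true. -/
def Sat {V : Type} (K : Finset (PropForm V)) : Prop :=
  ∃ v : V → Bool, ∀ f ∈ K, f.eval v = true

/-- `M` is a minimal unsatisfiable set: inconsistent, with every proper subset consistent. -/
def IsMUS {V : Type} (M : Finset (PropForm V)) : Prop :=
  ¬ Sat M ∧ ∀ M' ⊂ M, Sat M'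

/-- The set of minimal unsatisfiable subsets of `K`. -/
def MUSes {V : Type} (K : Finset (PropForm V)) : Set (Finset (PropForm V)) :=
  {M | M ⊆ K ∧ IsMUS M}

/-- `M` is a maximal satisfiable subset of `K`. -/
def IsMSSof {V : Type} [DecidableEq V] (K M : Finset (PropForm V)) : Prop :=
  M ⊆ K ∧ Sat M ∧ ∀ a ∈ K, a ∉ M → ¬ Sat (insert a M)

/-- The set of maximal satisfiable subsets of `K`. -/
def MSSes {V : Type} [DecidableEq V] (K : Finset (PropForm V)) : Set (Finset (PropForm V)) :=
  {M | IsMSSof K M}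

/-- The unfree formulas of `K`: those belonging to some MUS of `K`. -/
def unfree {V : Type} (K : Finset (PropForm V)) : Set (PropForm V) :=
  ⋃ M ∈ MUSes K, (↑M : Set (PropForm V))

/-- Self-contradictory formulas of `K`. -/
def selfC {V : Type} (K : Finset (PropForm V)) : Set (PropForm V) :=
  {a | a ∈ K ∧ ¬ Sat {a}}

/-- The measure `I_M(K) = |MSSes(K)| + |selfC(K)| - 1`. -/
noncomputable def IM {V : Type} [DecidableEq V] (K : Finset (PropForm V)) : ℤ :=
  ((MSSes K).ncard : ℤ) + ((selfC K).ncard : ℤ) - 1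

/-!
Satisfiable knowledge bases over disjoint sets of variables glue together. Hence, for
variable-disjoint `K₁` and `K₂`, every MUS of `K₁ ∪ K₂` lies in `K₁` or in `K₂`, while the
MSSes of `K₁ ∪ K₂` are exactly the unions `M₁ ∪ M₂` of MSSes of the parts: the number of
MSSes is multiplicative rather than additive. Each of `{a, ¬a}` and `{b, ¬b}` has two MSSes
and no self-contradictory formula, so `I_M` is `2 - 1 = 1` on each of them but `2 · 2 - 1 = 3`
on their union.
-/

open PropForm

namespace PropForm

variable {V : Type}

def vars : PropForm V → Set V
  | var p => {p}
  | neg f => f.vars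
  | conj f g => f.vars ∪ g.vars
  | disj f g => f.vars ∪ g.vars

theorem vars_nonempty : ∀ f : PropForm V, f.vars.Nonempty
  | var p => Set.singleton_nonempty p
  | neg f => vars_nonempty f
  | conj f _ => (vars_nonempty f).mono Set.subset_union_left
  | disj f _ => (vars_nonempty f).mono Set.subset_union_left

theorem eval_congr {v w : V → Bool} :
    ∀ {f : PropForm V}, (∀ p ∈ f.vars, v p = w p) → f.eval v = f.eval w
  | var p, h => h p rfl
  | neg f, h => by simp only [eval, eval_congr (f := f) h]
  | conj f g, h | disj f g, h => by
    rw [eval, eval, eval_congr fun p hp => h p (Or.inl hp),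
      eval_congr fun p hp => h p (Or.inr hp)]

end PropForm

theorem Finset.inter_union_inter_of_subset_union {α : Type*} [DecidableEq α] {s t u : Finset α}
    (h : s ⊆ t ∪ u) : s ∩ t ∪ s ∩ u = s := by
  rw [← Finset.inter_union_distrib_left, Finset.inter_eq_left.2 h]

section KnowledgeBase

variable {V : Type} {K K₁ K₂ L₁ L₂ M : Finset (PropForm V)}

theorem sat_empty : Sat (∅ : Finset (PropForm V)) :=
  ⟨fun _ => true, by simp⟩

theorem Sat.subset (hK : Sat K) (hM : M ⊆ K) : Sat M :=
  let ⟨v, hv⟩ := hK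
  ⟨v, fun f hf => hv f (hM hf)⟩

theorem sat_singleton_var (x : V) : Sat {var x} :=
  ⟨fun _ => true, by simp [eval]⟩

theorem sat_singleton_neg_var (x : V) : Sat {neg (var x)} :=
  ⟨fun _ => false, by simp [eval]⟩

theorem not_sat_of_mem_of_neg_mem {f : PropForm V} (hf : f ∈ M) (hn : neg f ∈ M) :
    ¬ Sat M := by
  rintro ⟨v, hv⟩
  have := hv _ hn
  simp [eval, hv f hf] at this

theorem IsMUS.nonempty (hM : IsMUS M) : M.Nonempty := by
  rw [Finset.nonempty_iff_ne_empty]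
  rintro rfl
  exact hM.1 sat_empty

theorem unfree_subset : unfree K ⊆ K := by
  simp only [unfree, MUSes, Set.iUnion_subset_iff]
  exact fun _ hM => Finset.coe_subset.2 hM.1

theorem selfC_eq_empty (hK : ∀ f ∈ K, Sat {f}) : selfC K = ∅ :=
  Set.eq_empty_of_forall_notMem fun f hf => hf.2 (hK f hf.1)

def Independent (K₁ K₂ : Finset (PropForm V)) : Prop :=
  ∀ f ∈ K₁, ∀ g ∈ K₂, Disjoint f.vars g.vars

namespace Independent

theorem symm (h : Independent K₁ K₂) : Independent K₂ K₁ :=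
  fun f hf g hg => (h g hg f hf).symm

theorem mono (h : Independent K₁ K₂) (h₁ : L₁ ⊆ K₁) (h₂ : L₂ ⊆ K₂) : Independent L₁ L₂ :=
  fun f hf g hg => h f (h₁ hf) g (h₂ hg)

theorem disjoint (h : Independent K₁ K₂) : Disjoint K₁ K₂ :=
  Finset.disjoint_left.2 fun f h₁ h₂ =>
    (vars_nonempty f).ne_empty (disjoint_self.1 (h f h₁ f h₂))

theorem disjoint_MUSes (h : Independent K₁ K₂) : Disjoint (MUSes K₁) (MUSes K₂) := by
  refine Set.disjoint_left.2 fun M h₁ h₂ => ?_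
  obtain ⟨f, hf⟩ := h₁.2.nonempty
  exact Finset.disjoint_left.1 h.disjoint (h₁.1 hf) (h₂.1 hf)

theorem unfree_inter_eq_empty (h : Independent K₁ K₂) : unfree K₁ ∩ unfree K₂ = ∅ :=
  Set.disjoint_iff_inter_eq_empty.1 <|
    (Finset.disjoint_coe.2 h.disjoint).mono unfree_subset unfree_subset

variable [DecidableEq V]

theorem sat_union (h : Independent K₁ K₂) (h₁ : Sat K₁) (h₂ : Sat K₂) : Sat (K₁ ∪ K₂) := by
  classical
  obtain ⟨v₁, hv₁⟩ := h₁
  obtain ⟨v₂, hv₂⟩ := h₂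
  refine ⟨fun p => if ∃ f ∈ K₁, p ∈ f.vars then v₁ p else v₂ p, fun f hf => ?_⟩
  rcases Finset.mem_union.1 hf with hf | hf
  · rw [← hv₁ f hf]
    exact eval_congr fun p hp => if_pos ⟨f, hf, hp⟩
  · rw [← hv₂ f hf]
    refine eval_congr fun p hp => if_neg ?_
    rintro ⟨g, hg, hpg⟩
    exact Set.disjoint_left.1 (h g hg f hf) hpg hp

theorem union_inter_left (h : Independent K₁ K₂) (h₁ : L₁ ⊆ K₁) (h₂ : L₂ ⊆ K₂) :
    (L₁ ∪ L₂) ∩ K₁ = L₁ := by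
  have := Finset.disjoint_left.1 h.disjoint
  ext f
  simp only [Finset.mem_inter, Finset.mem_union]
  exact ⟨fun ⟨hf, hK⟩ => hf.resolve_right fun hL => this hK (h₂ hL),
    fun hf => ⟨Or.inl hf, h₁ hf⟩⟩

theorem isMUS_subset_or_subset (h : Independent K₁ K₂) (hM : IsMUS M) (hMK : M ⊆ K₁ ∪ K₂) :
    M ⊆ K₁ ∨ M ⊆ K₂ := by
  by_contra! hnot
  have hssubset {K : Finset (PropForm V)} (hK : ¬ M ⊆ K) : M ∩ K ⊂ M :=
    Finset.inter_subset_left.ssubset_of_not_subset fun h' => hK (h'.trans Finset.inter_subset_right)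
  apply hM.1
  rw [← Finset.inter_union_inter_of_subset_union hMK]
  exact (h.mono Finset.inter_subset_right Finset.inter_subset_right).sat_union
    (hM.2 _ (hssubset hnot.1)) (hM.2 _ (hssubset hnot.2))

theorem MUSes_union (h : Independent K₁ K₂) : MUSes (K₁ ∪ K₂) = MUSes K₁ ∪ MUSes K₂ := by
  ext M
  refine ⟨fun ⟨hMK, hM⟩ => ?_, ?_⟩
  · exact (h.isMUS_subset_or_subset hM hMK).imp (⟨·, hM⟩) (⟨·, hM⟩)
  · rintro (⟨hMK, hM⟩ | ⟨hMK, hM⟩)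
    exacts [⟨hMK.trans Finset.subset_union_left, hM⟩, ⟨hMK.trans Finset.subset_union_right, hM⟩]

theorem isMSSof_inter (h : Independent K₁ K₂) (hM : IsMSSof (K₁ ∪ K₂) M) :
    IsMSSof K₁ (M ∩ K₁) := by
  refine ⟨Finset.inter_subset_right, hM.2.1.subset Finset.inter_subset_left,
    fun a ha haM hsat => ?_⟩
  have haM' : a ∉ M := fun h' => haM (Finset.mem_inter.2 ⟨h', ha⟩)
  refine hM.2.2 a (Finset.mem_union_left _ ha) haM' <|
    (h.mono ?_ Finset.inter_subset_right).sat_union hsat (hM.2.1.subset Finset.inter_subset_left)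
      |>.subset ?_
  · exact Finset.insert_subset ha Finset.inter_subset_right
  · rw [Finset.insert_union, Finset.inter_union_inter_of_subset_union hM.1]

theorem isMSSof_union (h : Independent K₁ K₂) {M₁ M₂ : Finset (PropForm V)}
    (h₁ : IsMSSof K₁ M₁) (h₂ : IsMSSof K₂ M₂) : IsMSSof (K₁ ∪ K₂) (M₁ ∪ M₂) := by
  refine ⟨Finset.union_subset_union h₁.1 h₂.1, h.mono h₁.1 h₂.1 |>.sat_union h₁.2.1 h₂.2.1,
    fun a ha haM hsat => ?_⟩
  rw [Finset.mem_union, not_or] at haM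
  rcases Finset.mem_union.1 ha with ha | ha
  · exact h₁.2.2 a ha haM.1 (hsat.subset (Finset.insert_subset_insert _ Finset.subset_union_left))
  · exact h₂.2.2 a ha haM.2 (hsat.subset (Finset.insert_subset_insert _ Finset.subset_union_right))

theorem MSSes_union (h : Independent K₁ K₂) :
    MSSes (K₁ ∪ K₂) = Set.image2 (· ∪ ·) (MSSes K₁) (MSSes K₂) := by
  ext M
  refine ⟨fun hM => ⟨M ∩ K₁, h.isMSSof_inter hM, M ∩ K₂, ?_,
    Finset.inter_union_inter_of_subset_union hM.1⟩, ?_⟩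
  · exact h.symm.isMSSof_inter (Finset.union_comm K₁ K₂ ▸ hM)
  · rintro ⟨M₁, h₁, M₂, h₂, rfl⟩
    exact h.isMSSof_union h₁ h₂

theorem ncard_MSSes_union (h : Independent K₁ K₂) :
    (MSSes (K₁ ∪ K₂)).ncard = (MSSes K₁).ncard * (MSSes K₂).ncard := by
  rw [h.MSSes_union, ← Set.image_uncurry_prod, Set.InjOn.ncard_image, Set.ncard_prod]
  rintro ⟨M₁, M₂⟩ ⟨h₁, h₂⟩ ⟨M₁', M₂'⟩ ⟨h₁', h₂'⟩ heq
  have heq' : M₂ ∪ M₁ = M₂' ∪ M₁' := by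
    simpa only [Function.uncurry_apply_pair, Finset.union_comm] using heq
  refine Prod.ext ?_ ?_
  · rw [← h.union_inter_left h₁.1 h₂.1, ← h.union_inter_left h₁'.1 h₂'.1]
    exact congrArg (· ∩ K₁) heq
  · rw [← h.symm.union_inter_left h₂.1 h₁.1, ← h.symm.union_inter_left h₂'.1 h₁'.1]
    exact congrArg (· ∩ K₂) heq'

end Independent

theorem selfC_union [DecidableEq V] : selfC (K₁ ∪ K₂) = selfC K₁ ∪ selfC K₂ := by
  ext f
  simp only [selfC, Set.mem_ofPred_eq, Set.mem_union, Finset.mem_union, or_and_right]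

end KnowledgeBase

section ComplementaryPair

variable {V : Type} [DecidableEq V] {f : PropForm V}

theorem MSSes_pair_neg (hf : Sat {f}) (hn : Sat {neg f}) :
    MSSes {f, neg f} = {{f}, {neg f}} := by
  ext M
  simp only [MSSes, Set.mem_ofPred_eq, Set.mem_insert_iff, Set.mem_singleton_iff]
  constructor
  · rintro ⟨hsub, hsat, hmax⟩
    have hM : ∀ g ∈ M, g = f ∨ g = neg f := fun g hg => by simpa using hsub hg
    by_cases hfM : f ∈ M
    · refine Or.inl <| Finset.eq_singleton_iff_unique_mem.2
        ⟨hfM, fun g hg => (hM g hg).resolve_right ?_⟩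
      rintro rfl
      exact not_sat_of_mem_of_neg_mem hfM hg hsat
    · have hM' : ∀ g ∈ M, g = neg f := fun g hg =>
        (hM g hg).resolve_left fun h => hfM (h ▸ hg)
      refine Or.inr <| Finset.eq_singleton_iff_unique_mem.2 ⟨?_, hM'⟩
      by_contra hnM
      obtain rfl : M = ∅ := Finset.eq_empty_of_forall_notMem fun g hg => hnM (hM' g hg ▸ hg)
      exact hmax f (by simp) hfM (by simpa using hf)
  · rintro (rfl | rfl)
    · refine ⟨by simp, hf, fun g hg hgM => ?_⟩
      obtain rfl : g = neg f := by simpa [Finset.mem_singleton.not.1 hgM] using hg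
      exact not_sat_of_mem_of_neg_mem (by simp) (Finset.mem_insert_self _ _)
    · refine ⟨by simp, hn, fun g hg hgM => ?_⟩
      obtain rfl : g = f := (Finset.mem_insert.1 hg).resolve_right hgM
      exact not_sat_of_mem_of_neg_mem (Finset.mem_insert_self _ _) (by simp)

theorem ncard_MSSes_pair_neg (hf : Sat {f}) (hn : Sat {neg f}) :
    (MSSes {f, neg f}).ncard = 2 := by
  rw [MSSes_pair_neg hf hn, Set.ncard_pair]
  intro h
  exact not_sat_of_mem_of_neg_mem (Finset.mem_singleton_self f)
    (h ▸ Finset.mem_singleton_self _) hf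

theorem selfC_pair_neg (hf : Sat {f}) (hn : Sat {neg f}) : selfC {f, neg f} = ∅ :=
  selfC_eq_empty (by simp [hf, hn])

theorem independent_var_pairs {a b : V} (hab : a ≠ b) :
    Independent {var a, neg (var a)} {var b, neg (var b)} := by
  simp [Independent, vars, hab.symm]

end ComplementaryPair

theorem stmt8 {V : Type} [DecidableEq V] (a b : V) (hab : a ≠ b) :
    let K1 : Finset (PropForm V) := {PropForm.var a, PropForm.neg (PropForm.var a)}
    let K2 : Finset (PropForm V) := {PropForm.var b, PropForm.neg (PropForm.var b)}
    (MUSes (K1 ∪ K2) = MUSes K1 ∪ MUSes K2) ∧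
    Disjoint (MUSes K1) (MUSes K2) ∧
    unfree K1 ∩ unfree K2 = ∅ ∧
    IM (K1 ∪ K2) = 3 ∧ IM K1 + IM K2 = 2 := by
  intro K1 K2
  have hK : Independent K1 K2 := independent_var_pairs hab
  have hMSS (x : V) : (MSSes {var x, neg (var x)}).ncard = 2 :=
    ncard_MSSes_pair_neg (sat_singleton_var x) (sat_singleton_neg_var x)
  have hselfC (x : V) : selfC {var x, neg (var x)} = ∅ :=
    selfC_pair_neg (sat_singleton_var x) (sat_singleton_neg_var x)
  refine ⟨hK.MUSes_union, hK.disjoint_MUSes, hK.unfree_inter_eq_empty, ?_, ?_⟩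
  · rw [IM, hK.ncard_MSSes_union, selfC_union, hMSS, hMSS, hselfC, hselfC]
    norm_num
  · rw [IM, IM, hMSS, hMSS, hselfC, hselfC]
    norm_num
end

section
/- Let K be an inconsistent finite knowledge base and {K₁,…,Kₙ} a distributable MUS-decomposition of K. If for each i, K'ᵢ is a consistent knowledge base obtained from Kᵢ by removing formulas (K'ᵢ ⊆ Kᵢ and K'ᵢ consistent), then K' = K'₁ ∪ ⋯ ∪ K'ₙ is consistent. -/
/-- A partial MUS-decomposition of `K`: a family of pairwise-disjoint inconsistent
subsets of `K` such that the MUSes of their union are exactly the disjoint union of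
the MUSes of the components. -/
def IsPartialMUSdecomp {V : Type} [DecidableEq V] (K : Finset (PropForm V))
    (T : Finset (Finset (PropForm V))) : Prop :=
  (∀ Ki ∈ T, Ki ⊆ K ∧ ¬ Sat Ki) ∧
  (↑T : Set (Finset (PropForm V))).PairwiseDisjoint id ∧
  MUSes (T.sup id) = ⋃ Ki ∈ T, MUSes Ki ∧
  (↑T : Set (Finset (PropForm V))).Pairwise fun A B => Disjoint (MUSes A) (MUSes B)

/-- The distribution index: maximal cardinality of a partial MUS-decomposition. -/
noncomputable def muD {V : Type} [DecidableEq V] (K : Finset (PropForm V)) : ℕ :=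
  sSup {n : ℕ | ∃ T : Finset (Finset (PropForm V)), IsPartialMUSdecomp K T ∧ T.card = n}

/-- A distributable MUS-decomposition: a maximal partial MUS-decomposition in which
each component is a union of MUSes. -/
def IsDistributableMUSdecomp {V : Type} [DecidableEq V] (K : Finset (PropForm V))
    (T : Finset (Finset (PropForm V))) : Prop :=
  IsPartialMUSdecomp K T ∧ T.card = muD K ∧
  ∀ Ki ∈ T, (↑Ki : Set (PropForm V)) = ⋃ M ∈ MUSes Ki, (↑M : Set (PropForm V))

/-!
A minimal unsatisfiable subset `M` of `⋃ K'ᵢ` is also one of `⋃ Kᵢ`, hence, by the defining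
property of a partial MUS-decomposition, of a single component `Kᵢ`. Since the components
are pairwise disjoint and `K'ⱼ ⊆ Kⱼ`, the formulas of `M` can only come from `K'ᵢ`, so `M ⊆ K'ᵢ`,
contradicting the consistency of `K'ᵢ`.
-/

theorem Sat.of_subset {V : Type} {A B : Finset (PropForm V)} (hAB : A ⊆ B) (hB : Sat B) :
    Sat A := by
  obtain ⟨v, hv⟩ := hB
  exact ⟨v, fun f hf => hv f (hAB hf)⟩

theorem exists_isMUS_subset_of_not_sat {V : Type} (S : Finset (PropForm V)) (hS : ¬ Sat S) :
    ∃ M ⊆ S, IsMUS M := by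
  induction S using Finset.strongInduction with
  | _ S ih =>
    by_cases hmin : ∀ S' ⊂ S, Sat S'
    · exact ⟨S, subset_rfl, hS, hmin⟩
    · push Not at hmin
      obtain ⟨S', hS'S, hS'⟩ := hmin
      obtain ⟨M, hMS', hM⟩ := ih S' hS'S hS'
      exact ⟨M, hMS'.trans hS'S.subset, hM⟩

theorem Finset.subset_of_subset_sup_of_pairwiseDisjoint {ι α : Type*} [DecidableEq α]
    {T : Finset ι} {A B : ι → Finset α} (hA : (↑T : Set ι).PairwiseDisjoint A)
    (hBA : ∀ j ∈ T, B j ⊆ A j) {M : Finset α} {i : ι} (hi : i ∈ T)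
    (hMB : M ⊆ T.sup B) (hMA : M ⊆ A i) : M ⊆ B i := by
  intro f hf
  obtain ⟨j, hj, hfj⟩ := Finset.mem_sup.mp (hMB hf)
  obtain rfl | hji := eq_or_ne j i
  · exact hfj
  · exact absurd (hMA hf) (Finset.disjoint_left.mp (hA hj hi hji) (hBA j hj hfj))

theorem IsPartialMUSdecomp.sat_sup {V : Type} [DecidableEq V] {K : Finset (PropForm V)}
    {T : Finset (Finset (PropForm V))} (hT : IsPartialMUSdecomp K T)
    {K' : Finset (PropForm V) → Finset (PropForm V)}
    (hK' : ∀ Ki ∈ T, K' Ki ⊆ Ki ∧ Sat (K' Ki)) :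
    Sat (T.sup K') := by
  obtain ⟨-, hdisj, hMUSes, -⟩ := hT
  by_contra hunsat
  obtain ⟨M, hMK', hM⟩ := exists_isMUS_subset_of_not_sat _ hunsat
  have hK'K : T.sup K' ⊆ T.sup id := Finset.sup_mono_fun fun Ki hKi => (hK' Ki hKi).1
  have hMmem : M ∈ ⋃ Ki ∈ T, MUSes Ki := hMUSes ▸ ⟨hMK'.trans hK'K, hM⟩
  obtain ⟨Ki, hKi, hMKi, -⟩ := Set.mem_iUnion₂.mp hMmem
  have hMsub : M ⊆ K' Ki := Finset.subset_of_subset_sup_of_pairwiseDisjoint hdisj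
    (fun Kj hKj => (hK' Kj hKj).1) hKi hMK' hMKi
  exact hM.1 ((hK' Ki hKi).2.of_subset hMsub)

theorem stmt11_general {V : Type} [DecidableEq V] (K : Finset (PropForm V))
    (T : Finset (Finset (PropForm V))) (hT : IsDistributableMUSdecomp K T)
    (K' : Finset (PropForm V) → Finset (PropForm V))
    (hK' : ∀ Ki ∈ T, K' Ki ⊆ Ki ∧ Sat (K' Ki)) :
    Sat (T.sup K') :=
  hT.1.sat_sup hK'

theorem stmt11 {V : Type} [DecidableEq V] (K : Finset (PropForm V)) (h : ¬ Sat K)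
    (T : Finset (Finset (PropForm V))) (hT : IsDistributableMUSdecomp K T)
    (K' : Finset (PropForm V) → Finset (PropForm V))
    (hK' : ∀ Ki ∈ T, K' Ki ⊆ Ki ∧ Sat (K' Ki)) :
    Sat (T.sup K') :=
  stmt11_general K T hT K' hK'
end
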